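/- Let xs < xt be integers, C ≥ 0 a real number, and f : ℤ → ℝ a function satisfying the Ameso(C) condition on [xs,xt]. Suppose there exist x' ∈ [xs,xt] and z ∈ [xs,xt] with x' < z ≤ xt such that f(z) − f(x') ≥ C. Then min over y ∈ [xs, z] of f(y) equals min over y ∈ [xs, xt] of f(y). -/

import Mathlib

/-!
An Ameso(C) function is midpoint convex up to the error `C` along every symmetric pair
`m - d, m + d`. Subtracting a chord keeps this property and makes the function vanish at the
chord's endpoints; at a maximiser `m` one reflects the nearer endpoint through `m`, which
bounds the maximum by the error. So `f` lies at most `C` above each of its chords. Applied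
to the chord from `x'` to some `b > z`, the rise `f z ≥ f x' + C` then forces `f b ≥ f x'`:
no point right of `z` goes below `f x'`, hence the minimum is already attained on `[xs, z]`.
-/

/-- Ceiling of `(x+y)/2` as a rational. -/
def mceil (x y : ℤ) : ℤ := ⌈((x : ℚ) + (y : ℚ)) / 2⌉

/-- Floor of `(x+y)/2` as a rational. -/
def mfloor (x y : ℤ) : ℤ := ⌊((x : ℚ) + (y : ℚ)) / 2⌋

lemma cast_sub_add_div_two (m d : ℤ) : (((m - d : ℤ) : ℚ) + ((m + d : ℤ) : ℚ)) / 2 = m := by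
  push_cast
  ring

@[simp]
lemma mceil_sub_add (m d : ℤ) : mceil (m - d) (m + d) = m := by
  rw [mceil, cast_sub_add_div_two, Int.ceil_intCast]

@[simp]
lemma mfloor_sub_add (m d : ℤ) : mfloor (m - d) (m + d) = m := by
  rw [mfloor, cast_sub_add_div_two, Int.floor_intCast]

def AlmostMidConvexOn (D : ℝ) (g : ℤ → ℝ) (a c : ℤ) : Prop :=
  ∀ m d : ℤ, 0 ≤ d → a ≤ m - d → m + d ≤ c → 2 * g m ≤ g (m - d) + g (m + d) + D

def AmesoOn (C : ℝ) (f : ℤ → ℝ) (xs xt : ℤ) : Prop :=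
  ∀ x ∈ Finset.Icc xs xt, ∀ y ∈ Finset.Icc xs xt,
    f x + f y + C ≥ f (mceil x y) + f (mfloor x y)

lemma AmesoOn.almostMidConvexOn {C : ℝ} {f : ℤ → ℝ} {xs xt a c : ℤ} (hf : AmesoOn C f xs xt)
    (ha : xs ≤ a) (hc : c ≤ xt) : AlmostMidConvexOn C f a c := by
  intro m d hd hl hr
  have hpair := hf (m - d) (Finset.mem_Icc.2 ⟨by omega, by omega⟩)
    (m + d) (Finset.mem_Icc.2 ⟨by omega, by omega⟩)
  rw [mceil_sub_add, mfloor_sub_add] at hpair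
  linarith

def chordGap (g : ℤ → ℝ) (a c : ℤ) (v : ℤ) : ℝ :=
  (c - a) * g v - (c - v) * g a - (v - a) * g c

section

variable {D : ℝ} {g : ℤ → ℝ} {a c : ℤ}

lemma AlmostMidConvexOn.le_of_endpoints_nonpos (hg : AlmostMidConvexOn D g a c)
    (ha : g a ≤ 0) (hc : g c ≤ 0) {b : ℤ} (hb : b ∈ Finset.Icc a c) : g b ≤ D := by
  obtain ⟨m, hm, hmax⟩ := Finset.exists_max_image (Finset.Icc a c) g ⟨b, hb⟩
  obtain ⟨ham, hmc⟩ := Finset.mem_Icc.1 hm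
  suffices g m ≤ D from (hmax b hb).trans this
  rcases le_total (m - a) (c - m) with hnear | hnear
  · have hmid := hg m (m - a) (by omega) (by omega) (by omega)
    have hrefl := hmax (m + (m - a)) (Finset.mem_Icc.2 ⟨by omega, by omega⟩)
    rw [sub_sub_cancel] at hmid
    linarith
  · have hmid := hg m (c - m) (by omega) (by omega) (by omega)
    have hrefl := hmax (m - (c - m)) (Finset.mem_Icc.2 ⟨by omega, by omega⟩)
    rw [add_sub_cancel] at hmid
    linarith

lemma almostMidConvexOn_chordGap (hg : AlmostMidConvexOn D g a c) (hac : a ≤ c) :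
    AlmostMidConvexOn ((c - a) * D) (chordGap g a c) a c := by
  intro m d hd hl hr
  have hmid := mul_le_mul_of_nonneg_left (hg m d hd hl hr) (by simpa using hac : (0 : ℝ) ≤ c - a)
  simp only [chordGap]
  push_cast
  linarith

lemma AlmostMidConvexOn.le_chord (hg : AlmostMidConvexOn D g a c) {b : ℤ}
    (hb : b ∈ Finset.Icc a c) :
    (c - a) * g b ≤ (c - b) * g a + (b - a) * g c + (c - a) * D := by
  have hac : a ≤ c := (Finset.mem_Icc.1 hb).1.trans (Finset.mem_Icc.1 hb).2
  have hgap := (almostMidConvexOn_chordGap hg hac).le_of_endpoints_nonpos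
    (by simp [chordGap]) (by simp [chordGap]) hb
  simp only [chordGap] at hgap
  linarith

lemma AlmostMidConvexOn.left_le_right_of_rise (hg : AlmostMidConvexOn D g a c) {z : ℤ}
    (haz : a < z) (hzc : z < c) (hrise : g a + D ≤ g z) : g a ≤ g c := by
  have hchord := hg.le_chord (b := z) (Finset.mem_Icc.2 ⟨haz.le, hzc.le⟩)
  have hca : (0 : ℝ) ≤ c - a := sub_nonneg.2 (by exact_mod_cast (haz.trans hzc).le)
  have hrise' := mul_le_mul_of_nonneg_left hrise hca
  have hscaled : (z - a) * g a ≤ (z - a) * g c := by linarith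
  exact le_of_mul_le_mul_left hscaled (sub_pos.2 (by exact_mod_cast haz))

end

/-- Corollary 2: if `x' < z` in `[xs, xt]` and `f(z) - f(x') ≥ C`, then the minimum of
`f` over `[xs, z]` equals the minimum over `[xs, xt]`. -/
theorem ameso_restrict_right
    (xs xt : ℤ) (C : ℝ) (f : ℤ → ℝ)
    (hAmeso : ∀ x ∈ Finset.Icc xs xt, ∀ y ∈ Finset.Icc xs xt,
      f x + f y + C ≥ f (mceil x y) + f (mfloor x y))
    (x' z : ℤ) (hx'l : xs ≤ x') (hx'z : x' < z) (hz : z ≤ xt)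
    (hgap : f z - f x' ≥ C) :
    (Finset.Icc xs z).inf' (Finset.nonempty_Icc.2 (by omega)) f
      = (Finset.Icc xs xt).inf' (Finset.nonempty_Icc.2 (by omega)) f := by
  refine le_antisymm (Finset.le_inf' _ _ fun b hb => ?_)
    (Finset.inf'_mono f (Finset.Icc_subset_Icc_right hz) _)
  obtain ⟨hxb, hbt⟩ := Finset.mem_Icc.1 hb
  rcases le_or_gt b z with hbz | hzb
  · exact Finset.inf'_le f (Finset.mem_Icc.2 ⟨hxb, hbz⟩)
  · have hconv := AmesoOn.almostMidConvexOn hAmeso hx'l hbt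
    calc (Finset.Icc xs z).inf' _ f
        ≤ f x' := Finset.inf'_le f (Finset.mem_Icc.2 ⟨hx'l, hx'z.le⟩)
      _ ≤ f b := hconv.left_le_right_of_rise hx'z hzb (by linarith)
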